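/- arXiv:math/0407352 — 2 statements merged into one kernel-verified Lean document; each statement's English description precedes it below -/
import Mathlib

section
/- Let (X, α) be a partial dynamical system with α injective. Then the projection Φ : X̃ → X, Φ(x₀, x₁, ...) = x₀, is a homeomorphism if and only if the image Δ₋₁ = α(Δ₁) is open in X. -/
open Set

variable {X : Type*}

/-- `pdsDom α Δ n` is the domain `Δₙ` of the `n`-th iterate of the
partial map `α : Δ → X`. -/
def pdsDom (α : X → X) (Δ : Set X) : ℕ → Set X
  | 0 => Set.univ
  | n + 1 => Δ ∩ α ⁻¹' pdsDom α Δ n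

/-- The point `0` adjoined to `X`: we realize `X ∪ {0}` as `X ⊕ Unit`,
with `0 := Sum.inr ()`. -/
abbrev pdsZero (X : Type*) : X ⊕ Unit := Sum.inr ()

/-- The set `X_∞` of infinite anti-orbits of `(X, α)`, inside the
product `∏_{n ∈ ℕ} (X ∪ {0})`. -/
def XInf (α : X → X) (Δ : Set X) : Set (ℕ → X ⊕ Unit) :=
  {p | (∀ n, ∃ x, p n = Sum.inl x ∧ x ∈ pdsDom α Δ n) ∧
       (∀ n x, p (n + 1) = Sum.inl x → x ∈ Δ ∧ p n = Sum.inl (α x))}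

/-- The set `X_N` of anti-orbits of length exactly `N`: sequences
`(x₀, …, x_N, 0, 0, …)` with `xₙ ∈ Δₙ`, `α xₙ = x_{n-1}` and `x_N ∉ α(Δ)`. -/
def XN (α : X → X) (Δ : Set X) (N : ℕ) : Set (ℕ → X ⊕ Unit) :=
  {p | (∀ n ≤ N, ∃ x, p n = Sum.inl x ∧ x ∈ pdsDom α Δ n) ∧
       (∀ n, N < n → p n = pdsZero X) ∧
       (∀ n x, p (n + 1) = Sum.inl x → x ∈ Δ ∧ p n = Sum.inl (α x)) ∧
       (∀ x, p N = Sum.inl x → x ∉ α '' Δ)}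

/-- The `α`-extension `X̃ = ⋃_N X_N ∪ X_∞` of `X`. -/
def Xtilde (α : X → X) (Δ : Set X) : Set (ℕ → X ⊕ Unit) :=
  (⋃ N, XN α Δ N) ∪ XInf α Δ

/-- The map `α̃ : (x₀, x₁, …) ↦ (α x₀, x₀, x₁, …)` on sequences. -/
def tShift (α : X → X) : (ℕ → X ⊕ Unit) → (ℕ → X ⊕ Unit) :=
  fun p n => Nat.casesOn n (Sum.map α id (p 0)) fun k => p k

/-- The backwards shift `(x₀, x₁, x₂, …) ↦ (x₁, x₂, …)`. -/
def bShift : (ℕ → X ⊕ Unit) → (ℕ → X ⊕ Unit) := fun p n => p (n + 1)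

/-- The domain `Δ̃₁ = {x̃ ∈ X̃ : x₀ ∈ Δ₁}` of `α̃`. -/
def tDelta1 (α : X → X) (Δ : Set X) : Set (ℕ → X ⊕ Unit) :=
  {p | p ∈ Xtilde α Δ ∧ ∃ x ∈ Δ, p 0 = Sum.inl x}

/-- The image `Δ̃₋₁ = {x̃ ∈ X̃ : x₁ ≠ 0}` of `α̃`. -/
def tDeltaM1 (α : X → X) (Δ : Set X) : Set (ℕ → X ⊕ Unit) :=
  {p | p ∈ Xtilde α Δ ∧ p 1 ≠ pdsZero X}

/-- `V` is invariant under the partial map `α : Δ → X`: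
`αⁿ(V ∩ Δₙ) = V ∩ Δ₋ₙ` for all `n ∈ ℕ`. -/
def PdsInvariant (α : X → X) (Δ : Set X) (V : Set X) : Prop :=
  ∀ n : ℕ, α^[n] '' (V ∩ pdsDom α Δ n) = V ∩ α^[n] '' pdsDom α Δ n

/-- The set `Fₙ = {x ∈ Δₙ : αⁿ x = x}` of `n`-periodic points. -/
def pdsFix (α : X → X) (Δ : Set X) (n : ℕ) : Set X :=
  {x | x ∈ pdsDom α Δ n ∧ α^[n] x = x}

/-- Topological freedom of the partial map `α : Δ → X`: for every `n > 0`,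
every nonempty relatively open subset of `Fₙ` contains a point `x` with
`|α⁻ᵏ(x)| > 1` for some `1 ≤ k ≤ n`. -/
def TopFree [TopologicalSpace X] (α : X → X) (Δ : Set X) : Prop :=
  ∀ n : ℕ, 0 < n → ∀ W : Set X, IsOpen W → (W ∩ pdsFix α Δ n).Nonempty →
    ∃ x ∈ W ∩ pdsFix α Δ n, ∃ k, 1 ≤ k ∧ k ≤ n ∧
      ∃ y z, y ∈ pdsDom α Δ k ∧ z ∈ pdsDom α Δ k ∧
        α^[k] y = x ∧ α^[k] z = x ∧ y ≠ z

/-!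
Membership in `X̃` is a condition on consecutive pairs of coordinates (`IsAntiOrbitStep`).
Injectivity of `α` makes this relation deterministic, so an anti-orbit is determined by its
first point, and every `x` starts one, obtained by choosing preimages for as long as they exist.
Hence `Φ` is a continuous bijection. It maps the open set `{x̃ : x₁ ≠ 0}` onto `α(Δ)`, so `α(Δ)`
is open when `Φ` is a homeomorphism. Conversely, the condition "`x_n ∉ α(Δ)` whenever
`x_{n+1} = 0`" is closed when `α(Δ)` is open; then `X̃` is closed in the compact
product, and a continuous bijection from a compact space onto a Hausdorff one is a homeomorphism.
-/

section AntiOrbit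

variable {α : X → X} {Δ : Set X}

def IsAntiOrbitStep (α : X → X) (Δ : Set X) (a b : X ⊕ Unit) : Prop :=
  (∀ x, b = Sum.inl x → x ∈ Δ ∧ a = Sum.inl (α x)) ∧
    (∀ x, a = Sum.inl x → b = pdsZero X → x ∉ α '' Δ)

lemma exists_eq_inl_or_eq_pdsZero (a : X ⊕ Unit) : (∃ x, a = Sum.inl x) ∨ a = pdsZero X := by
  rcases a with x | ⟨⟩
  exacts [Or.inl ⟨x, rfl⟩, Or.inr rfl]

lemma IsAntiOrbitStep.right_unique (hinj : InjOn α Δ) {a b b' : X ⊕ Unit}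
    (h : IsAntiOrbitStep α Δ a b) (h' : IsAntiOrbitStep α Δ a b') : b = b' := by
  rcases exists_eq_inl_or_eq_pdsZero b with ⟨x, rfl⟩ | rfl <;>
    rcases exists_eq_inl_or_eq_pdsZero b' with ⟨x', rfl⟩ | rfl
  · obtain ⟨hx, rfl⟩ := h.1 x rfl
    obtain ⟨hx', ha⟩ := h'.1 x' rfl
    rw [hinj hx hx' (Sum.inl_injective ha)]
  · obtain ⟨hx, rfl⟩ := h.1 x rfl
    exact absurd (mem_image_of_mem α hx) (h'.2 _ rfl rfl)
  · obtain ⟨hx', rfl⟩ := h'.1 x' rfl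
    exact absurd (mem_image_of_mem α hx') (h.2 _ rfl rfl)
  · rfl

variable {p : ℕ → X ⊕ Unit}

lemma mem_pdsDom_of_isAntiOrbitStep (hp : ∀ n, IsAntiOrbitStep α Δ (p n) (p (n + 1))) :
    ∀ n x, p n = Sum.inl x → x ∈ pdsDom α Δ n
  | 0, _, _ => trivial
  | n + 1, x, hx =>
    have ⟨hxΔ, hpn⟩ := (hp n).1 x hx
    ⟨hxΔ, mem_pdsDom_of_isAntiOrbitStep hp n (α x) hpn⟩

lemma exists_eq_inl_mem_pdsDom (hp : ∀ n, IsAntiOrbitStep α Δ (p n) (p (n + 1))) {n : ℕ}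
    (hn : p n ≠ pdsZero X) : ∃ x, p n = Sum.inl x ∧ x ∈ pdsDom α Δ n :=
  have ⟨x, hx⟩ := (exists_eq_inl_or_eq_pdsZero (p n)).resolve_right hn
  ⟨x, hx, mem_pdsDom_of_isAntiOrbitStep hp n x hx⟩

lemma eq_pdsZero_of_isAntiOrbitStep (hp : ∀ n, IsAntiOrbitStep α Δ (p n) (p (n + 1)))
    {m : ℕ} (hm : p m = pdsZero X) {n : ℕ} (hmn : m ≤ n) : p n = pdsZero X := by
  induction n, hmn using Nat.le_induction with
  | base => exact hm
  | succ n _ ih =>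
    rcases exists_eq_inl_or_eq_pdsZero (p (n + 1)) with ⟨x, hx⟩ | h
    · exact absurd (ih ▸ ((hp n).1 x hx).2) Sum.inr_ne_inl
    · exact h

lemma isAntiOrbitStep_of_mem_XN {N : ℕ} (hp : p ∈ XN α Δ N) (n : ℕ) :
    IsAntiOrbitStep α Δ (p n) (p (n + 1)) := by
  obtain ⟨hdom, hzero, hstep, hlast⟩ := hp
  refine ⟨hstep n, fun x hx h0 => ?_⟩
  rcases lt_trichotomy n N with hn | rfl | hn
  · obtain ⟨y, hy, -⟩ := hdom (n + 1) hn
    exact absurd (hy ▸ h0) Sum.inl_ne_inr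
  · exact hlast x hx
  · exact absurd (hzero n hn ▸ hx) Sum.inr_ne_inl

lemma isAntiOrbitStep_of_mem_XInf (hp : p ∈ XInf α Δ) (n : ℕ) :
    IsAntiOrbitStep α Δ (p n) (p (n + 1)) := by
  obtain ⟨hdom, hstep⟩ := hp
  refine ⟨hstep n, fun x _ h0 => ?_⟩
  obtain ⟨y, hy, -⟩ := hdom (n + 1)
  exact absurd (hy ▸ h0) Sum.inl_ne_inr

lemma mem_XN_of_isAntiOrbitStep (hp : ∀ n, IsAntiOrbitStep α Δ (p n) (p (n + 1)))
    (h0 : p 0 ≠ pdsZero X) {N : ℕ} (hN : p (N + 1) = pdsZero X)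
    (hmin : ∀ n < N, p (n + 1) ≠ pdsZero X) : p ∈ XN α Δ N := by
  refine ⟨fun n hn => exists_eq_inl_mem_pdsDom hp ?_,
    fun n hn => eq_pdsZero_of_isAntiOrbitStep hp hN hn, fun n => (hp n).1,
    fun x hx => (hp N).2 x hx hN⟩
  cases n with
  | zero => exact h0
  | succ n => exact hmin n hn

lemma mem_Xtilde_iff :
    p ∈ Xtilde α Δ ↔ (∃ x, p 0 = Sum.inl x) ∧ ∀ n, IsAntiOrbitStep α Δ (p n) (p (n + 1)) := by
  classical
  constructor
  · rintro (hp | hp)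
    · obtain ⟨N, hN⟩ := mem_iUnion.mp hp
      obtain ⟨x, hx, -⟩ := hN.1 0 (Nat.zero_le N)
      exact ⟨⟨x, hx⟩, isAntiOrbitStep_of_mem_XN hN⟩
    · obtain ⟨x, hx, -⟩ := hp.1 0
      exact ⟨⟨x, hx⟩, isAntiOrbitStep_of_mem_XInf hp⟩
  · rintro ⟨⟨x₀, hx₀⟩, hp⟩
    have h0 : p 0 ≠ pdsZero X := hx₀ ▸ Sum.inl_ne_inr
    by_cases hfin : ∃ N, p (N + 1) = pdsZero X
    · exact Or.inl (mem_iUnion.mpr ⟨_, mem_XN_of_isAntiOrbitStep hp h0 (Nat.find_spec hfin)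
        fun n hn => Nat.find_min hfin hn⟩)
    · simp only [not_exists] at hfin
      refine Or.inr ⟨fun n => exists_eq_inl_mem_pdsDom hp ?_, fun n => (hp n).1⟩
      cases n with
      | zero => exact h0
      | succ n => exact hfin n

lemma setOf_isAntiOrbitStep_eq :
    {q : (X ⊕ Unit) × (X ⊕ Unit) | IsAntiOrbitStep α Δ q.1 q.2} =
      ((fun x => (Sum.inl (α x), Sum.inl x)) '' Δ ∪ univ ×ˢ {pdsZero X}) \
        (Sum.inl '' (α '' Δ)) ×ˢ {pdsZero X} := by
  ext ⟨a, b⟩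
  rcases exists_eq_inl_or_eq_pdsZero b with ⟨y, rfl⟩ | rfl <;>
    rcases exists_eq_inl_or_eq_pdsZero a with ⟨x, rfl⟩ | rfl <;>
    simp [IsAntiOrbitStep, eq_comm]

lemma Xtilde_eq :
    Xtilde α Δ = (fun p : ℕ → X ⊕ Unit => p 0) ⁻¹' range Sum.inl ∩
      ⋂ n, (fun p : ℕ → X ⊕ Unit => (p n, p (n + 1))) ⁻¹'
        {q | IsAntiOrbitStep α Δ q.1 q.2} := by
  ext p
  simp only [mem_Xtilde_iff, mem_inter_iff, mem_preimage, mem_range, mem_iInter, mem_ofPred_eq,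
    eq_comm]

variable [TopologicalSpace X] [T2Space X]

lemma isClosed_setOf_isAntiOrbitStep (hΔ : IsCompact Δ) (hα : ContinuousOn α Δ)
    (hopen : IsOpen (α '' Δ)) :
    IsClosed {q : (X ⊕ Unit) × (X ⊕ Unit) | IsAntiOrbitStep α Δ q.1 q.2} := by
  rw [setOf_isAntiOrbitStep_eq]
  have hgraph : IsCompact ((fun x => (Sum.inl (α x), Sum.inl x)) '' Δ : Set ((X ⊕ Unit) × _)) :=
    hΔ.image_of_continuousOn
      (((continuous_inl (Y := Unit)).comp_continuousOn hα).prodMk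
        (continuous_inl (Y := Unit)).continuousOn)
  exact (hgraph.isClosed.union (isClosed_univ.prod isClosed_singleton)).sdiff
    ((isOpenMap_inl _ hopen).prod (by simpa using isOpenMap_inr (X := X) _ (isOpen_discrete {()})))

lemma isClosed_Xtilde (hΔ : IsCompact Δ) (hα : ContinuousOn α Δ) (hopen : IsOpen (α '' Δ)) :
    IsClosed (Xtilde α Δ) := by
  rw [Xtilde_eq]
  exact (isClosed_range_inl.preimage (continuous_apply 0)).inter <| isClosed_iInter fun n =>
    (isClosed_setOf_isAntiOrbitStep hΔ hα hopen).preimage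
      ((continuous_apply n).prodMk (continuous_apply (n + 1)))

end AntiOrbit

section MaximalAntiOrbit

variable (α : X → X) (Δ : Set X)

open Classical in
noncomputable def antiOrbitStep : X ⊕ Unit → X ⊕ Unit :=
  Sum.elim (fun y => if h : y ∈ α '' Δ then Sum.inl h.choose else pdsZero X) fun _ => pdsZero X

noncomputable def antiOrbit (x : X) (n : ℕ) : X ⊕ Unit :=
  (antiOrbitStep α Δ)^[n] (Sum.inl x)

lemma isAntiOrbitStep_antiOrbitStep (a : X ⊕ Unit) :
    IsAntiOrbitStep α Δ a (antiOrbitStep α Δ a) := by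
  rcases exists_eq_inl_or_eq_pdsZero a with ⟨y, rfl⟩ | rfl
  · by_cases h : y ∈ α '' Δ
    · have ⟨hΔ, hy⟩ := h.choose_spec
      have hstep : antiOrbitStep α Δ (Sum.inl y) = Sum.inl h.choose := by
        simp only [antiOrbitStep, Sum.elim_inl, dif_pos h]
      refine ⟨fun x hx => ?_, fun _ _ h0 => absurd (hstep ▸ h0) Sum.inl_ne_inr⟩
      rw [hstep, Sum.inl.injEq] at hx
      exact hx ▸ ⟨hΔ, congrArg Sum.inl hy.symm⟩
    · refine ⟨fun x hx => ?_, fun x hx _ => Sum.inl_injective hx ▸ h⟩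
      simp only [antiOrbitStep, Sum.elim_inl, dif_neg h, reduceCtorEq] at hx
  · exact ⟨fun x hx => absurd hx Sum.inr_ne_inl, fun x hx => absurd hx Sum.inr_ne_inl⟩

lemma antiOrbit_mem_Xtilde (x : X) : antiOrbit α Δ x ∈ Xtilde α Δ :=
  mem_Xtilde_iff.mpr ⟨⟨x, rfl⟩, fun n => by
    simpa only [antiOrbit, Function.iterate_succ_apply'] using
      isAntiOrbitStep_antiOrbitStep α Δ (antiOrbit α Δ x n)⟩

end MaximalAntiOrbit

section Projection

variable {α : X → X} {Δ : Set X} [Nonempty X]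

variable (α Δ) in
noncomputable def Phi (p : Xtilde α Δ) : X :=
  Sum.elim id (fun _ => Classical.arbitrary X) ((p : ℕ → X ⊕ Unit) 0)

lemma inl_Phi (p : Xtilde α Δ) : Sum.inl (Phi α Δ p) = (p : ℕ → X ⊕ Unit) 0 := by
  obtain ⟨⟨x, hx⟩, -⟩ := mem_Xtilde_iff.mp p.2
  rw [Phi, hx, Sum.elim_inl, id]

lemma continuous_Phi [TopologicalSpace X] : Continuous (Phi α Δ) :=
  (continuous_id.sumElim continuous_const).comp ((continuous_apply 0).comp continuous_subtype_val)

lemma Phi_injective (hinj : InjOn α Δ) : Function.Injective (Phi α Δ) := by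
  intro p q hpq
  have hp := (mem_Xtilde_iff.mp p.2).2
  have hq := (mem_Xtilde_iff.mp q.2).2
  refine Subtype.ext (funext fun n => ?_)
  induction n with
  | zero => rw [← inl_Phi, ← inl_Phi, hpq]
  | succ n ih => exact (hp n).right_unique hinj (ih ▸ hq n)

lemma Phi_surjective : Function.Surjective (Phi α Δ) :=
  fun x => ⟨⟨antiOrbit α Δ x, antiOrbit_mem_Xtilde α Δ x⟩, Sum.inl_injective (inl_Phi _)⟩

lemma Phi_image_setOf_apply_one_ne :
    Phi α Δ '' {p | (p : ℕ → X ⊕ Unit) 1 ≠ pdsZero X} = α '' Δ := by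
  ext y
  constructor
  · rintro ⟨p, hp1, rfl⟩
    obtain ⟨x₁, hx₁⟩ := (exists_eq_inl_or_eq_pdsZero _).resolve_right hp1
    obtain ⟨hx₁Δ, hp0⟩ := ((mem_Xtilde_iff.mp p.2).2 0).1 x₁ hx₁
    exact ⟨x₁, hx₁Δ, Sum.inl_injective (hp0 ▸ inl_Phi p).symm⟩
  · rintro ⟨x, hxΔ, rfl⟩
    obtain ⟨p, hp⟩ := Phi_surjective (α := α) (Δ := Δ) (α x)
    refine ⟨p, fun hp1 => ?_, hp⟩
    exact ((mem_Xtilde_iff.mp p.2).2 0).2 _ (hp ▸ inl_Phi p).symm hp1 (mem_image_of_mem α hxΔ)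

end Projection

/-- For an injective partial map `α`, the projection `Φ : X̃ → X` onto the
zeroth coordinate is a homeomorphism iff the image `α(Δ)` is open. -/
theorem Phi_isHomeomorph_iff {X : Type*} [TopologicalSpace X] [CompactSpace X]
    [T2Space X] [Nonempty X] (Δ : Set X) (hΔ : IsClopen Δ) (α : X → X)
    (hα : ContinuousOn α Δ) (hinj : Set.InjOn α Δ) :
    IsHomeomorph (fun p : Xtilde α Δ =>
        Sum.elim id (fun _ => Classical.arbitrary X) ((p : ℕ → X ⊕ Unit) 0)) ↔
      IsOpen (α '' Δ) := by
  change IsHomeomorph (Phi α Δ) ↔ _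
  constructor
  · intro h
    rw [← Phi_image_setOf_apply_one_ne]
    exact h.isOpenMap _ (isOpen_compl_singleton.preimage
      ((continuous_apply 1).comp continuous_subtype_val))
  · intro hopen
    have : CompactSpace (Xtilde α Δ) := isCompact_iff_compactSpace.mp
      (isClosed_Xtilde hΔ.isClosed.isCompact hα hopen).isCompact
    exact isHomeomorph_iff_continuous_bijective.mpr
      ⟨continuous_Phi, Phi_injective hinj, Phi_surjective⟩
end

section
/- Let (X, α) be a partial dynamical system such that α is injective on the inverse image of Δ₋∞ = ⋂_{n∈ℕ} Δ₋ₙ (i.e., |α⁻¹(x)| = 1 for every x ∈ Δ₋∞). Then every subset Ũ ⊆ X̃ is determined by its sections: Ũ = (U₀ × (U₁ ∪ {0}) × ... × (Uₙ ∪ {0}) × ...) ∩ X̃, where Uₙ = Φₙ(Ũ ∩ Δ̃₋ₙ) is the n-section of Ũ. -/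
open Set

variable {X : Type*}

/-!
A point of `X̃` is an anti-orbit `(x₀, x₁, …)`, `α xₙ₊₁ = xₙ`, which stops after `xₙ` exactly
when `xₙ ∉ α(Δ)`. For `p ∈ X_N`, a `q ∈ Ũ` with `q_N = p_N` agrees with `p` below `N` (apply `α`)
and stops at `N` as well, so `q = p`. For `p ∈ X_∞`, take `q ∈ Ũ` with `q₀ = p₀`: all coordinates
of `p` lie in `Δ₋∞`, where `α` has unique preimages, so `q` and `p` agree coordinate by
coordinate.
-/

variable {α : X → X} {Δ : Set X} {p q : ℕ → X ⊕ Unit} {m n : ℕ} {x : X}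

def IsAntiOrbit (α : X → X) (Δ : Set X) (p : ℕ → X ⊕ Unit) : Prop :=
  ∀ n x, p (n + 1) = Sum.inl x → x ∈ Δ ∧ p n = Sum.inl (α x)

lemma pdsDom_antitone : Antitone (pdsDom α Δ) :=
  antitone_nat_of_succ_le fun n => by
    induction n with
    | zero => exact subset_univ _
    | succ n ih => exact inter_subset_inter_right _ (preimage_mono ih)

lemma isAntiOrbit_of_mem_Xtilde (hp : p ∈ Xtilde α Δ) : IsAntiOrbit α Δ p := by
  rcases hp with hp | hp
  · obtain ⟨N, hN⟩ := mem_iUnion.mp hp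
    exact hN.2.2.1
  · exact hp.2

lemma exists_eq_inl_of_ne_pdsZero : ∀ {s : X ⊕ Unit}, s ≠ pdsZero X → ∃ y, s = Sum.inl y
  | Sum.inl y, _ => ⟨y, rfl⟩
  | Sum.inr (), h => absurd rfl h

namespace IsAntiOrbit

lemma apply_eq_iterate (hp : IsAntiOrbit α Δ p) :
    ∀ {k x}, p (m + k) = Sum.inl x → p m = Sum.inl (α^[k] x)
  | 0, _, h => h
  | k + 1, x, h => by
    rw [Function.iterate_succ_apply]
    exact apply_eq_iterate hp (hp (m + k) x h).2

lemma apply_eq_zero_of_le (hp : IsAntiOrbit α Δ p) (h0 : p n = pdsZero X) (hnm : n ≤ m) :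
    p m = pdsZero X := by
  obtain ⟨k, rfl⟩ := Nat.exists_eq_add_of_le hnm
  rcases hm : p (n + k) with y | ⟨⟨⟩⟩
  · rw [hp.apply_eq_iterate hm] at h0
    exact absurd h0 Sum.inl_ne_inr
  · rfl

end IsAntiOrbit

lemma apply_succ_ne_zero_iff_mem_image (hp : p ∈ Xtilde α Δ) (hx : p n = Sum.inl x) :
    p (n + 1) ≠ pdsZero X ↔ x ∈ α '' Δ := by
  constructor
  · intro hne
    obtain ⟨y, hy⟩ := exists_eq_inl_of_ne_pdsZero hne
    obtain ⟨hyΔ, hpn⟩ := isAntiOrbit_of_mem_Xtilde hp n y hy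
    exact ⟨y, hyΔ, Sum.inl_injective (hpn.symm.trans hx)⟩
  · intro hxα
    rcases hp with hp | hp
    · obtain ⟨N, hN⟩ := mem_iUnion.mp hp
      have hnN : n < N := by
        refine lt_of_le_of_ne (not_lt.mp fun hNn => ?_) fun hnN => ?_
        · exact Sum.inl_ne_inr (hx.symm.trans (hN.2.1 n hNn))
        · exact hN.2.2.2 x (hnN ▸ hx) hxα
      obtain ⟨y, hy, -⟩ := hN.1 (n + 1) hnN
      simp [hy]
    · obtain ⟨y, hy, -⟩ := hp.1 (n + 1)
      simp [hy]

lemma eq_of_apply_eq_inl_of_notMem_image (hp : p ∈ Xtilde α Δ) (hq : q ∈ Xtilde α Δ)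
    (hpq : p n = q n) (hx : p n = Sum.inl x) (hxα : x ∉ α '' Δ) : p = q := by
  have hzero : ∀ {r}, r ∈ Xtilde α Δ → r n = Sum.inl x → ∀ {m}, n < m → r m = pdsZero X :=
    fun hr hrx _ hnm => (isAntiOrbit_of_mem_Xtilde hr).apply_eq_zero_of_le
      (not_not.mp (mt (apply_succ_ne_zero_iff_mem_image hr hrx).mp hxα)) hnm
  funext m
  rcases le_or_gt m n with hmn | hnm
  · obtain ⟨k, rfl⟩ := Nat.exists_eq_add_of_le hmn
    rw [(isAntiOrbit_of_mem_Xtilde hp).apply_eq_iterate hx,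
      (isAntiOrbit_of_mem_Xtilde hq).apply_eq_iterate (hpq ▸ hx)]
  · rw [hzero hp hx hnm, hzero hq (hpq ▸ hx) hnm]

lemma mem_iInter_image_iterate_of_mem_XInf (hp : p ∈ XInf α Δ) (hx : p n = Sum.inl x) :
    x ∈ ⋂ m : ℕ, α^[m] '' pdsDom α Δ m := by
  refine mem_iInter.mpr fun m => ?_
  obtain ⟨y, hy, hydom⟩ := hp.1 (n + m)
  have hxy := (isAntiOrbit_of_mem_Xtilde (Or.inr hp)).apply_eq_iterate hy
  exact ⟨y, pdsDom_antitone (Nat.le_add_left m n) hydom, Sum.inl_injective (hxy.symm.trans hx)⟩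

lemma eq_of_mem_XInf
    (hinj : ∀ x ∈ ⋂ n : ℕ, α^[n] '' pdsDom α Δ n,
      ∀ y ∈ Δ, ∀ z ∈ Δ, α y = x → α z = x → y = z)
    (hq : q ∈ Xtilde α Δ) (hp : p ∈ XInf α Δ) (h0 : q 0 = p 0) : q = p := by
  funext n
  induction n with
  | zero => exact h0
  | succ n ih =>
    obtain ⟨x, hx, -⟩ := hp.1 n
    obtain ⟨y, hy, -⟩ := hp.1 (n + 1)
    obtain ⟨hyΔ, hxy⟩ := hp.2 n y hy
    have hqx : q n = Sum.inl x := ih.trans hx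
    have hxα : x ∈ α '' Δ := ⟨y, hyΔ, Sum.inl_injective (hxy.symm.trans hx)⟩
    obtain ⟨z, hz⟩ :=
      exists_eq_inl_of_ne_pdsZero ((apply_succ_ne_zero_iff_mem_image hq hqx).mpr hxα)
    obtain ⟨hzΔ, hxz⟩ := isAntiOrbit_of_mem_Xtilde hq n z hz
    rw [hz, hy, hinj x (mem_iInter_image_iterate_of_mem_XInf hp hx) z hzΔ y hyΔ
      (Sum.inl_injective (hxz.symm.trans hqx)) (Sum.inl_injective (hxy.symm.trans hx))]

theorem subset_eq_of_sections_general {X : Type*} (Δ : Set X) (α : X → X)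
    (hinj : ∀ x ∈ ⋂ n : ℕ, α^[n] '' pdsDom α Δ n,
      ∀ y ∈ Δ, ∀ z ∈ Δ, α y = x → α z = x → y = z)
    (U : Set (ℕ → X ⊕ Unit)) (hU : U ⊆ Xtilde α Δ) :
    U = {p | p ∈ Xtilde α Δ ∧
          ∀ n x, p n = Sum.inl x → x ∈ {w | ∃ q ∈ U, q n = Sum.inl w}} := by
  ext p
  refine ⟨fun hp => ⟨hU hp, fun n x hx => ⟨p, hp, hx⟩⟩, ?_⟩
  rintro ⟨hpX, hsec⟩
  rcases id hpX with hfin | hinf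
  · obtain ⟨N, hN⟩ := mem_iUnion.mp hfin
    obtain ⟨x, hx, -⟩ := hN.1 N le_rfl
    obtain ⟨q, hqU, hqx⟩ := hsec N x hx
    rwa [eq_of_apply_eq_inl_of_notMem_image hpX (hU hqU) (hx.trans hqx.symm) hx (hN.2.2.2 x hx)]
  · obtain ⟨x, hx, -⟩ := hinf.1 0
    obtain ⟨q, hqU, hqx⟩ := hsec 0 x hx
    rwa [← eq_of_mem_XInf hinj (hU hqU) hinf (hqx.trans hx.symm)]

/-- If `α` is injective on the preimage of `Δ₋∞ = ⋂ₙ Δ₋ₙ`, then every subset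
`Ũ ⊆ X̃` is determined by its sections `Uₙ = Φₙ(Ũ ∩ Δ̃₋ₙ)`:
`Ũ = (U₀ × (U₁ ∪ {0}) × ⋯) ∩ X̃`. -/
theorem subset_eq_of_sections {X : Type*} [TopologicalSpace X] [CompactSpace X]
    [T2Space X] (Δ : Set X) (hΔ : IsClopen Δ) (α : X → X) (hα : ContinuousOn α Δ)
    (hinj : ∀ x ∈ ⋂ n : ℕ, α^[n] '' pdsDom α Δ n,
      ∀ y ∈ Δ, ∀ z ∈ Δ, α y = x → α z = x → y = z)
    (U : Set (ℕ → X ⊕ Unit)) (hU : U ⊆ Xtilde α Δ) :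
    U = {p | p ∈ Xtilde α Δ ∧
          ∀ n x, p n = Sum.inl x → x ∈ {w | ∃ q ∈ U, q n = Sum.inl w}} :=
  subset_eq_of_sections_general Δ α hinj U hU
end
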